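/- Let k ≥ 2 and consider, for each n ≥ 2, a square sub-perfect map of side N_n ≥ n·(M(k^n, n) − max(1, n−3)) for pattern shape (n,n) over an alphabet of size k². Then N_n² / (k²)^(n²) → 1 as n → ∞; i.e., these maps form a family of almost perfect maps. -/

import Mathlib

open Finset Filter

/-!
Distinct positions of a sub-perfect map carry distinct `n × n` patterns, so `N_n² ≤ (k²)^(n²)`.
Conversely, every proper divisor of `n` is at most `n - 1` and `|μ| ≤ 1`, so
`n · M(x, n) ≥ xⁿ - n · x^(n-1)`; with `x = kⁿ` the hypothesis on `N_n` gives
`N_n ≥ k^(n²) (1 - 2n² / kⁿ)`. Hence `N_n / k^(n²)` is squeezed between `1 - 2n² 2⁻ⁿ` and `1`.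
-/

/-- `A` is a cyclic `M × N` array in which every `(m,n)`-pattern occurs at most once. -/
def IsSubPerfectMap (M N m n : ℕ) {α : Type*} (A : ZMod M → ZMod N → α) : Prop :=
  ∀ p q : ZMod M × ZMod N,
    (∀ (a : Fin m) (b : Fin n),
        A (p.1 + (a : ℕ)) (p.2 + (b : ℕ)) = A (q.1 + (a : ℕ)) (q.2 + (b : ℕ))) → p = q

theorem IsSubPerfectMap.mul_le_card_pow {M N m n : ℕ} {α : Type*} [Fintype α]
    {A : ZMod M → ZMod N → α} (hA : IsSubPerfectMap M N m n A) :
    M * N ≤ Fintype.card α ^ (m * n) := by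
  let pattern : ZMod M × ZMod N → Fin m → Fin n → α :=
    fun p a b => A (p.1 + (a : ℕ)) (p.2 + (b : ℕ))
  have hinj : pattern.Injective := fun p q hpq => hA p q fun a b => congrFun₂ hpq a b
  have : Finite (ZMod M × ZMod N) := Finite.of_injective pattern hinj
  simpa [Nat.card_eq_fintype_card, pow_mul, mul_comm m n] using
    Nat.card_le_card_of_injective pattern hinj

open ArithmeticFunction
open scoped ArithmeticFunction.Moebius

noncomputable def necklacePoly (q : ℝ) (n : ℕ) : ℝ :=
  (∑ d ∈ n.divisors, (μ (n / d) : ℝ) * q ^ d) / n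

theorem pow_sub_mul_pow_pred_le_mul_necklacePoly {x : ℝ} (hx : 1 ≤ x) {n : ℕ} (hn : n ≠ 0) :
    x ^ n - n * x ^ (n - 1) ≤ n * necklacePoly x n := by
  have hx0 : 0 ≤ x := zero_le_one.trans hx
  have hterm : ∀ d ∈ n.properDivisors, -x ^ (n - 1) ≤ (μ (n / d) : ℝ) * x ^ d := by
    intro d hd
    have hdn : d ≤ n - 1 := by have := (Nat.mem_properDivisors.1 hd).2; omega
    have hμ : |(μ (n / d) : ℝ)| ≤ 1 := by exact_mod_cast abs_moebius_le_one
    have hxd : x ^ d ≤ x ^ (n - 1) := pow_le_pow_right₀ hx hdn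
    have hbound : |(μ (n / d) : ℝ) * x ^ d| ≤ x ^ (n - 1) := by
      rw [abs_mul, abs_of_nonneg (pow_nonneg hx0 d)]
      simpa using mul_le_mul hμ hxd (by positivity) zero_le_one
    exact neg_le_of_abs_le hbound
  have hcard : (#n.properDivisors : ℝ) ≤ n := by
    exact_mod_cast (card_le_card Nat.properDivisors_subset_divisors).trans n.card_divisors_le_self
  have hsum := card_nsmul_le_sum _ _ _ hterm
  rw [necklacePoly, mul_div_cancel₀ _ (by exact_mod_cast hn), ← Nat.cons_self_properDivisors hn,
    sum_cons, Nat.div_self (Nat.pos_of_ne_zero hn), moebius_apply_one, Int.cast_one, one_mul]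
  rw [nsmul_eq_mul] at hsum
  nlinarith [pow_nonneg hx0 (n - 1)]

theorem one_sub_le_div_of_le_mul_necklacePoly {k n : ℕ} (hk : 2 ≤ k) (hn : n ≠ 0) {N : ℝ}
    (hN : n * (necklacePoly ((k : ℝ) ^ n) n - max 1 ((n : ℝ) - 3)) ≤ N) :
    1 - 2 * n ^ 2 * (1 / 2) ^ n ≤ N / (k : ℝ) ^ (n ^ 2) := by
  set x : ℝ := (k : ℝ) ^ n with hx
  have hx2 : 2 ^ n ≤ x := pow_le_pow_left₀ zero_le_two (by exact_mod_cast hk) n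
  have hx1 : 1 ≤ x := (one_le_pow₀ one_le_two).trans hx2
  have hn1 : (1 : ℝ) ≤ n := by exact_mod_cast Nat.one_le_iff_ne_zero.2 hn
  have hmax : max 1 ((n : ℝ) - 3) ≤ n := max_le hn1 (by linarith)
  have hneck := pow_sub_mul_pow_pred_le_mul_necklacePoly hx1 hn
  have hxn : x ^ n = x * x ^ (n - 1) := by rw [← pow_succ', Nat.sub_add_cancel (by omega)]
  have hpow : (k : ℝ) ^ (n ^ 2) = x ^ n := by rw [hx, ← pow_mul, sq]
  have hinv : 1 / x ≤ (1 / 2) ^ n := by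
    rw [one_div_pow]; exact one_div_le_one_div_of_le (by positivity) hx2
  have hlower : (1 - 2 * n ^ 2 * (1 / x)) * x ^ n ≤ N := by
    have hpred : 1 ≤ x ^ (n - 1) := one_le_pow₀ hx1
    have hexpand : (1 - 2 * n ^ 2 * (1 / x)) * x ^ n = x ^ n - 2 * n ^ 2 * x ^ (n - 1) := by
      rw [hxn]; field_simp
    have hn_sq : (n : ℝ) ≤ n ^ 2 := by nlinarith
    have hmax_le : n * max 1 ((n : ℝ) - 3) ≤ n ^ 2 * x ^ (n - 1) := by
      calc n * max 1 ((n : ℝ) - 3) ≤ n * n := by gcongr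
        _ ≤ n ^ 2 * x ^ (n - 1) := by nlinarith
    have hpred_le : n * x ^ (n - 1) ≤ n ^ 2 * x ^ (n - 1) := by gcongr
    rw [hexpand]
    linarith
  rw [hpow, le_div_iff₀ (by positivity)]
  exact le_trans (by gcongr) hlower

/-- Let `k ≥ 2` and, for each `n ≥ 2`, let a square `(N n, N n; n, n)_{k²}`-sub-perfect map
be given whose side satisfies `N n ≥ n·(M(k^n,n) − max 1 (n−3))`, with `M` the necklace
polynomial.  Then `(N n)² / (k²)^(n²) → 1` as `n → ∞`: the maps form a family of almost
perfect maps. -/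
theorem almostPerfect_family (k : ℕ) (hk : 2 ≤ k) (N : ℕ → ℕ)
    (A : ∀ n : ℕ, ZMod (N n) → ZMod (N n) → Fin (k ^ 2))
    (hsub : ∀ n : ℕ, 2 ≤ n → IsSubPerfectMap (N n) (N n) n n (A n))
    (hlow : ∀ n : ℕ, 2 ≤ n →
      ((N n : ℝ)) ≥ (n : ℝ) * ((∑ d ∈ n.divisors,
          (ArithmeticFunction.moebius (n / d) : ℝ) * ((k : ℝ) ^ n) ^ d) / n
            - max 1 ((n : ℝ) - 3))) :
    Tendsto (fun n : ℕ => ((N n : ℝ)) ^ 2 / ((k : ℝ) ^ 2) ^ (n ^ 2)) atTop (nhds 1) := by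
  have hratio_sq (n : ℕ) :
      (N n : ℝ) ^ 2 / ((k : ℝ) ^ 2) ^ (n ^ 2) = ((N n : ℝ) / k ^ (n ^ 2)) ^ 2 := by
    rw [div_pow, ← pow_mul, ← pow_mul, mul_comm]
  simp_rw [hratio_sq]
  suffices h : Tendsto (fun n => (N n : ℝ) / k ^ (n ^ 2)) atTop (nhds 1) by simpa using h.pow 2
  have herr : Tendsto (fun n : ℕ => 1 - 2 * (n : ℝ) ^ 2 * (1 / 2) ^ n) atTop (nhds 1) := by
    have h := tendsto_pow_const_mul_const_pow_of_abs_lt_one 2 (r := 1 / 2) (by norm_num)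
    simpa [mul_assoc] using (h.const_mul 2).const_sub 1
  refine tendsto_of_tendsto_of_tendsto_of_le_of_le' herr tendsto_const_nhds ?_ ?_
  · filter_upwards [eventually_ge_atTop 2] with n hn
    exact one_sub_le_div_of_le_mul_necklacePoly hk (by omega) (hlow n hn)
  · filter_upwards [eventually_ge_atTop 2] with n hn
    have hside : N n ≤ k ^ (n ^ 2) := Nat.mul_self_le_mul_self_iff.1 <|
      calc N n * N n ≤ (k ^ 2) ^ (n * n) := by simpa using (hsub n hn).mul_le_card_pow
        _ = k ^ (n ^ 2) * k ^ (n ^ 2) := by ring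
    rw [div_le_one (by positivity)]
    exact_mod_cast hside
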